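/- arXiv:1805.04393 — 2 statements merged into one kernel-verified Lean document; each statement's English description precedes it below -/
import Mathlib

section
/- Quadratic lower support function: let f : Ω → ℝ be continuous on an interval Ω and twice continuously differentiable except at finitely many points, with left and right derivatives existing everywhere and f'₊(ω) ≥ f'₋(ω) at every ω. Suppose f''(ω) ≥ γ at every point of twice-differentiability. Then for every point ω₀ ∈ Ω where f is differentiable, f(ω) ≥ f(ω₀) + f'(ω₀)(ω − ω₀) + (γ/2)(ω − ω₀)² for all ω ∈ Ω. -/
/-!
Put `g ω = f ω - (γ/2) ω²`. Off the finitely many kinks `g'' = f'' - γ ≥ 0`, so `g` is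
convex on each piece of `Ω` between consecutive kinks. At a kink `p` the slopes of secants
ending at `p` are at most `g'₋(p)`, those starting at `p` at least `g'₊(p)`, and
`g'₋(p) ≤ g'₊(p)`; hence the convex pieces glue to a convex function on all of `Ω`. A convex
function lies above its tangent line at any point of differentiability, which for `g` is the
claimed quadratic lower bound on `f`.
-/

open Set

lemma slope_le_slope_of_slope_le_slope_left {f : ℝ → ℝ} {a b c : ℝ} (hab : a < b)
    (hbc : b < c) (h : slope f a b ≤ slope f b c) : slope f a b ≤ slope f a c := by
  rw [slope_def_field, slope_def_field] at *
  rw [div_le_div_iff₀ (by linarith) (by linarith)] at *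
  nlinarith

lemma slope_le_slope_of_slope_le_slope_right {f : ℝ → ℝ} {a b c : ℝ} (hab : a < b)
    (hbc : b < c) (h : slope f a b ≤ slope f b c) : slope f a c ≤ slope f b c := by
  rw [slope_def_field, slope_def_field] at *
  rw [div_le_div_iff₀ (by linarith) (by linarith)] at *
  nlinarith

lemma convexOn_of_convexOn_inter_Iic_Ici {S : Set ℝ} {g : ℝ → ℝ} {p dm dp : ℝ}
    (hS : Convex ℝ S) (hp : p ∈ S)
    (hl : ConvexOn ℝ (S ∩ Iic p) g) (hr : ConvexOn ℝ (S ∩ Ici p) g)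
    (hdm : HasDerivWithinAt g dm (Iic p) p) (hdp : HasDerivWithinAt g dp (Ici p) p)
    (hle : dm ≤ dp) : ConvexOn ℝ S g := by
  have hpl : p ∈ S ∩ Iic p := ⟨hp, self_mem_Iic⟩
  have hpr : p ∈ S ∩ Ici p := ⟨hp, self_mem_Ici⟩
  have kink {a b : ℝ} (ha : a ∈ S) (hb : b ∈ S) (hap : a < p) (hpb : p < b) :
      slope g a p ≤ slope g p b :=
    calc slope g a p ≤ dm := hl.slope_le_of_hasDerivWithinAt_Iio ⟨ha, hap.le⟩ hpl hap
            (hdm.mono Iio_subset_Iic_self)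
      _ ≤ dp := hle
      _ ≤ slope g p b := hr.le_slope_of_hasDerivWithinAt_Ioi hpr ⟨hb, hpb.le⟩ hpb
            (hdp.mono Ioi_subset_Ici_self)
  refine convexOn_of_slope_mono_adjacent hS fun {x y z} hx hz hxy hyz => ?_
  have hy : y ∈ S := hS.ordConnected.out hx hz ⟨hxy.le, hyz.le⟩
  simp only [← slope_def_field]
  rcases le_or_gt z p with hzp | hpz
  · simpa only [slope_def_field] using
      hl.slope_mono_adjacent ⟨hx, (hxy.trans hyz).le.trans hzp⟩ ⟨hz, hzp⟩ hxy hyz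
  rcases le_or_gt p x with hpx | hxp
  · simpa only [slope_def_field] using
      hr.slope_mono_adjacent ⟨hx, hpx⟩ ⟨hz, hpx.trans (hxy.trans hyz).le⟩ hxy hyz
  rcases lt_trichotomy y p with hyp | rfl | hpy
  · calc slope g x y ≤ slope g y p := by
          simpa only [slope_def_field] using
            hl.slope_mono_adjacent ⟨hx, hxp.le⟩ hpl hxy hyp
      _ ≤ slope g y z := slope_le_slope_of_slope_le_slope_left hyp hpz (kink hy hz hyp hpz)
  · exact kink hx hz hxy hyz
  · calc slope g x y ≤ slope g p y :=
          slope_le_slope_of_slope_le_slope_right hxp hpy (kink hx hy hxp hpy)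
      _ ≤ slope g y z := by
          simpa only [slope_def_field] using
            hr.slope_mono_adjacent hpr ⟨hz, (hpy.trans hyz).le⟩ hpy hyz

lemma hasDerivAt_half_mul_sq (γ x : ℝ) :
    HasDerivAt (fun y : ℝ => γ / 2 * y ^ 2) (γ * x) x := by
  refine ((hasDerivAt_pow 2 x).const_mul (γ / 2)).congr_deriv ?_
  push_cast
  ring

lemma convexOn_sub_half_mul_sq {S : Set ℝ} {f f' f'' : ℝ → ℝ} {γ : ℝ} (hS : Convex ℝ S)
    (hf : ContinuousOn f S) (hf' : ∀ x ∈ interior S, HasDerivAt f (f' x) x)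
    (hf'' : ∀ x ∈ interior S, HasDerivAt f' (f'' x) x) (hγ : ∀ x ∈ interior S, γ ≤ f'' x) :
    ConvexOn ℝ S (fun x => f x - γ / 2 * x ^ 2) := by
  refine convexOn_of_hasDerivWithinAt2_nonneg (f' := fun x => f' x - γ * x)
    (f'' := fun x => f'' x - γ) hS (hf.sub (by fun_prop)) (fun x hx => ?_) (fun x hx => ?_)
    (fun x hx => sub_nonneg.2 (hγ x hx))
  · exact ((hf' x hx).sub (hasDerivAt_half_mul_sq γ x)).hasDerivWithinAt
  · exact ((hf'' x hx).sub (hasDerivAt_const_mul γ)).hasDerivWithinAt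

lemma convexOn_sub_half_mul_sq_of_finite_kinks (Γ : Finset ℝ) {S : Set ℝ}
    {f f' f'' f'm f'p : ℝ → ℝ} {γ : ℝ} (hS : Convex ℝ S) (hf : ContinuousOn f S)
    (hf' : ∀ x ∈ interior S \ Γ, HasDerivAt f (f' x) x)
    (hf'' : ∀ x ∈ interior S \ Γ, HasDerivAt f' (f'' x) x)
    (hγ : ∀ x ∈ interior S \ Γ, γ ≤ f'' x)
    (hminus : ∀ p ∈ S, HasDerivWithinAt f (f'm p) (Iic p) p)
    (hplus : ∀ p ∈ S, HasDerivWithinAt f (f'p p) (Ici p) p)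
    (hjump : ∀ p ∈ S, f'm p ≤ f'p p) :
    ConvexOn ℝ S (fun x => f x - γ / 2 * x ^ 2) := by
  induction Γ using Finset.induction_on generalizing S with
  | empty =>
    simp only [Finset.coe_empty, sdiff_empty] at hf' hf'' hγ
    exact convexOn_sub_half_mul_sq hS hf hf' hf'' hγ
  | @insert p Γ _ ih =>
    have piece {T : Set ℝ} (hTS : T ⊆ S) (hT : Convex ℝ T) (hpT : p ∉ interior T) :
        ConvexOn ℝ T (fun x => f x - γ / 2 * x ^ 2) := by
      have sub : interior T \ Γ ⊆ interior S \ ↑(insert p Γ) := by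
        rintro x ⟨hxT, hxΓ⟩
        refine ⟨interior_mono hTS hxT, ?_⟩
        simp only [Finset.coe_insert, mem_insert_iff, Finset.mem_coe, not_or]
        exact ⟨fun hxp => hpT (hxp ▸ hxT), hxΓ⟩
      exact ih hT (hf.mono hTS) (fun x hx => hf' x (sub hx)) (fun x hx => hf'' x (sub hx))
        (fun x hx => hγ x (sub hx)) (fun x hx => hminus x (hTS hx))
        (fun x hx => hplus x (hTS hx)) (fun x hx => hjump x (hTS hx))
    by_cases hpS : p ∈ S
    · refine convexOn_of_convexOn_inter_Iic_Ici hS hpS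
        (piece inter_subset_left (hS.inter (convex_Iic p)) ?_)
        (piece inter_subset_left (hS.inter (convex_Ici p)) ?_)
        ((hminus p hpS).sub (hasDerivAt_half_mul_sq γ p).hasDerivWithinAt)
        ((hplus p hpS).sub (hasDerivAt_half_mul_sq γ p).hasDerivWithinAt)
        (sub_le_sub_right (hjump p hpS) _)
      · simp [interior_inter]
      · simp [interior_inter]
    · exact piece subset_rfl hS fun hp => hpS (interior_subset hp)

lemma ConvexOn.add_mul_sub_le_of_hasDerivWithinAt {S : Set ℝ} {g : ℝ → ℝ} {x y d : ℝ}
    (hg : ConvexOn ℝ S g) (hx : x ∈ S) (hy : y ∈ S) (hd : HasDerivWithinAt g d S x) :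
    g x + d * (y - x) ≤ g y := by
  rcases lt_trichotomy y x with hyx | rfl | hxy
  · have h := hg.slope_le_of_hasDerivWithinAt hy hx hyx hd
    rw [slope_def_field, div_le_iff₀ (sub_pos.2 hyx)] at h
    linarith
  · simp
  · have h := hg.le_slope_of_hasDerivWithinAt hx hy hxy hd
    rw [slope_def_field, le_div_iff₀ (sub_pos.2 hxy)] at h
    linarith

/-- Quadratic lower support: if `f` is continuous on an interval `Ω`, twice continuously
differentiable off a finite set `Γ` with `f'' ≥ γ` there, has one-sided derivatives
everywhere with `f'₋ ≤ f'₊`, then about any point `ω₀ ∈ Ω` of differentiability,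
`f(ω) ≥ f(ω₀) + f'(ω₀)(ω - ω₀) + (γ/2)(ω - ω₀)²` on `Ω`. -/
theorem stmt14 (Ω : Set ℝ) (hΩ : Convex ℝ Ω) (f f'p f'm : ℝ → ℝ) (γ : ℝ) (Γ : Finset ℝ)
    (hcont : ContinuousOn f Ω)
    (hplus : ∀ ω ∈ Ω, HasDerivWithinAt f (f'p ω) (Set.Ici ω) ω)
    (hminus : ∀ ω ∈ Ω, HasDerivWithinAt f (f'm ω) (Set.Iic ω) ω)
    (hjump : ∀ ω ∈ Ω, f'm ω ≤ f'p ω)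
    (hC2 : ∀ ω ∈ Ω, ω ∉ Γ → ContDiffAt ℝ 2 f ω)
    (hsec : ∀ ω ∈ Ω, ω ∉ Γ → γ ≤ deriv (deriv f) ω)
    (ω₀ : ℝ) (hω₀ : ω₀ ∈ Ω) (hdiff : DifferentiableAt ℝ f ω₀) :
    ∀ ω ∈ Ω, f ω₀ + deriv f ω₀ * (ω - ω₀) + γ / 2 * (ω - ω₀) ^ 2 ≤ f ω := by
  have hC2' (x : ℝ) (hx : x ∈ interior Ω \ Γ) : ContDiffAt ℝ 2 f x :=
    hC2 x (interior_subset hx.1) hx.2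
  have hconv : ConvexOn ℝ Ω (fun x => f x - γ / 2 * x ^ 2) :=
    convexOn_sub_half_mul_sq_of_finite_kinks Γ hΩ hcont
      (fun x hx => ((hC2' x hx).differentiableAt two_ne_zero).hasDerivAt)
      (fun x hx => (((hC2' x hx).derivWithin (m := 1) le_rfl).differentiableAt
        one_ne_zero).hasDerivAt)
      (fun x hx => hsec x (interior_subset hx.1) hx.2) hminus hplus hjump
  intro ω hω
  have h := hconv.add_mul_sub_le_of_hasDerivWithinAt hω₀ hω
    (hdiff.hasDerivAt.sub (hasDerivAt_half_mul_sq γ ω₀)).hasDerivWithinAt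
  linear_combination h
end

section
/- Squeeze lemma for the subspace framework: let f, g_k : Ω → ℝ be continuous functions on a compact interval Ω with g_k ≤ f pointwise for all k (monotonicity), and suppose there are points ω_k ∈ Ω with g_k(ω_k) = f(ω_k) (interpolation) and g_k(ω_{k+1}) ≤ min_Ω f. If all g_k are Lipschitz with a common constant η and ω_{k}, ω_{k+1} → ω̄, then f(ω̄) = min_Ω f. -/
/-- Squeeze lemma for the subspace framework: if `g_k ≤ f` on the compact interval,
`g_k(ω_k) = f(ω_k)`, `g_k(ω_{k+1}) ≤ min f`, the `g_k` are uniformly `η`-Lipschitz, and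
`ω_k → ω̄`, then `f(ω̄) = min f`. -/
theorem stmt18 (a b : ℝ) (f : ℝ → ℝ) (g : ℕ → ℝ → ℝ) (η : ℝ)
    (hf : ContinuousOn f (Set.Icc a b))
    (hle : ∀ k : ℕ, ∀ ω ∈ Set.Icc a b, g k ω ≤ f ω)
    (ωk : ℕ → ℝ) (hmem : ∀ k, ωk k ∈ Set.Icc a b)
    (hinterp : ∀ k, g k (ωk k) = f (ωk k))
    (hlb : ∀ k, g k (ωk (k + 1)) ≤ sInf (f '' Set.Icc a b))
    (hlip : ∀ k : ℕ, ∀ ω₁ ∈ Set.Icc a b, ∀ ω₂ ∈ Set.Icc a b,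
      |g k ω₁ - g k ω₂| ≤ η * |ω₁ - ω₂|)
    (ωbar : ℝ) (hconv : Filter.Tendsto ωk Filter.atTop (nhds ωbar)) :
    f ωbar = sInf (f '' Set.Icc a b) := by
  set m := sInf (f '' Set.Icc a b) with hm
  have hbar : ωbar ∈ Set.Icc a b :=
    isClosed_Icc.mem_of_tendsto hconv (Filter.Eventually.of_forall hmem)
  have hcomp : IsCompact (f '' Set.Icc a b) := (isCompact_Icc).image_of_continuousOn hf
  have hbdd : BddBelow (f '' Set.Icc a b) := hcomp.bddBelow
  -- lower bound
  have h1 : m ≤ f ωbar := csInf_le hbdd ⟨ωbar, hbar, rfl⟩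
  -- key estimate
  have key : ∀ k, f (ωk k) ≤ m + η * |ωk k - ωk (k + 1)| := by
    intro k
    have := hlip k (ωk k) (hmem k) (ωk (k + 1)) (hmem (k + 1))
    have h2 : g k (ωk k) - g k (ωk (k + 1)) ≤ η * |ωk k - ωk (k + 1)| :=
      (le_abs_self _).trans this
    have := hlb k
    nlinarith [hinterp k]
  -- limits
  have htend1 : Filter.Tendsto (fun k => f (ωk k)) Filter.atTop (nhds (f ωbar)) := by
    have : Filter.Tendsto ωk Filter.atTop (nhdsWithin ωbar (Set.Icc a b)) :=
      tendsto_nhdsWithin_iff.2 ⟨hconv, Filter.Eventually.of_forall hmem⟩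
    exact (hf ωbar hbar).tendsto.comp this
  have htend2 : Filter.Tendsto (fun k => m + η * |ωk k - ωk (k + 1)|)
      Filter.atTop (nhds (m + η * |ωbar - ωbar|)) := by
    have h3 : Filter.Tendsto (fun k => ωk (k + 1)) Filter.atTop (nhds ωbar) :=
      hconv.comp (Filter.tendsto_add_atTop_nat 1)
    exact Filter.Tendsto.const_add _ (Filter.Tendsto.const_mul _
      ((hconv.sub h3).abs))
  have h4 : f ωbar ≤ m := by
    have := le_of_tendsto_of_tendsto' htend1 htend2 key
    simpa using this
  linarith
end
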